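/- arXiv:1710.00225 — 2 statements merged into one kernel-verified Lean document; each statement's English description precedes it below -/
import Mathlib

section
/- Let η be an algebraic integer all of whose conjugates in ℂ have complex absolute value 1. Then η is a root of unity. -/
/-!
The powers of `η` are algebraic integers of the number field `ℚ(η)` all of whose conjugates lie
on the unit circle. The coefficients of their minimal polynomials are then bounded integers, so
only finitely many of these powers are distinct: `η ^ a = η ^ b` for some `a > b`, and as `η ≠ 0`
this gives `η ^ (a - b) = 1`.
-/

open Polynomial IntermediateField NumberField

theorem IntermediateField.numberField_adjoin_simple {L : Type*} [Field L] [CharZero L] {η : L}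
    (h : IsIntegral ℚ η) : NumberField ℚ⟮η⟯ where
  to_finiteDimensional := adjoin.finiteDimensional h

theorem IntermediateField.aeval_ringHom_gen_minpoly {L M : Type*} [Field L] [CharZero L] [Field M]
    [CharZero M] {η : L} (φ : ℚ⟮η⟯ →+* M) : aeval (φ (AdjoinSimple.gen ℚ η)) (minpoly ℚ η) = 0 := by
  rw [← minpoly_gen]
  exact minpoly.aeval_algHom _ φ.toRatAlgHom _

/-- Kronecker's theorem: an algebraic integer `η ∈ ℂ` all of whose conjugates
(i.e. all roots in `ℂ` of its minimal polynomial over `ℚ`) have complex absolute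
value `1` is a root of unity. -/
theorem kronecker_root_of_unity (η : ℂ) (hint : IsIntegral ℤ η)
    (hconj : ∀ ξ : ℂ, Polynomial.aeval ξ (minpoly ℚ η) = 0 → ‖ξ‖ = 1) :
    ∃ n : ℕ, 0 < n ∧ η ^ n = 1 := by
  have := numberField_adjoin_simple hint.tower_top
  have hgen : IsIntegral ℤ (AdjoinSimple.gen ℚ η) := by
    rwa [← isIntegral_algebraMap_iff (algebraMap ℚ⟮η⟯ ℂ).injective]
  obtain ⟨n, hn, h⟩ := Embeddings.pow_eq_one_of_norm_eq_one ℚ⟮η⟯ ℂ hgen fun φ ↦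
    hconj _ (aeval_ringHom_gen_minpoly φ)
  exact ⟨n, hn, by simpa using congrArg (algebraMap ℚ⟮η⟯ ℂ) h⟩
end

section
/- Let p = 2 and let E_p/F_q be a quadratic extension of 2-adic fields with Galois involution c. Suppose d ∈ F_q^× satisfies Tr_{F_q/ℚ_2}(d·Nm_{E_p/F_q}(x)) ∈ ℤ_2 for all x ∈ O_{E_p}, and that E_p/F_q is totally ramified. Then Tr_{F_q/ℚ_2}(d·x) ∈ ℤ_2 for all x ∈ O_{F_q}. -/
/-!
Let `ϖ` be a uniformizer of `O_E`. Total ramification makes `π = Nm ϖ` a uniformizer of `O_F`,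
and `Nm (ϖ ^ n * s) = π ^ n * s ^ 2` for `s ∈ O_F`. The residue field of `O_F` is finite of
characteristic `2`, so every element of `O_F` is a square modulo `π`; successive approximation
then writes any `y ∈ O_F` as a sum of norms plus an element of `π ^ k O_F = 2 O_F`, and
`2 t = (t + 1) ^ 2 - t ^ 2 - 1` is a sum of norms too. Hence the additive group of `y` with
`Tr (d * y) ∈ ℤ₂`, which contains all norms, is all of `O_F`.
-/

open IsLocalRing Module

theorem IsScalarTower.algebraMap_injective_of_injective {R K L O : Type*} [CommRing R] [Field K]
    [CommRing L] [Nontrivial L] [Algebra R K] [Algebra K L] [Algebra R L] [IsScalarTower R K L]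
    [CommRing O] [Algebra O L] [Algebra R O] [IsScalarTower R O L]
    (h : Function.Injective (algebraMap R K)) : Function.Injective (algebraMap R O) := by
  refine Function.Injective.of_comp (f := algebraMap O L) ?_
  rw [← RingHom.coe_comp, ← IsScalarTower.algebraMap_eq, IsScalarTower.algebraMap_eq R K L,
    RingHom.coe_comp]
  exact (algebraMap K L).injective.comp h

theorem AddSubgroup.two_mul_mem_of_forall_sq_mem {A : Type*} [CommRing A] (S : AddSubgroup A)
    (hS : ∀ s, s ^ 2 ∈ S) (t : A) : 2 * t ∈ S := by
  have h : 2 * t = (t + 1) ^ 2 - t ^ 2 - 1 ^ 2 := by ring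
  rw [h]
  exact S.sub_mem (S.sub_mem (hS _) (hS _)) (hS _)

theorem IsLocalRing.exists_sub_sq_mem_maximalIdeal {A : Type*} [CommRing A] [IsLocalRing A]
    [Finite (ResidueField A)] (h2 : (2 : A) ∈ maximalIdeal A) (a : A) :
    ∃ s, a - s ^ 2 ∈ maximalIdeal A := by
  have : Fact (Nat.Prime 2) := ⟨Nat.prime_two⟩
  have : CharP (ResidueField A) 2 := (CharP.charP_iff_prime_eq_zero Nat.prime_two).mpr <| by
    rw [Nat.cast_ofNat, ← map_ofNat (residue A) 2]
    exact (residue_eq_zero_iff 2).mpr h2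
  obtain ⟨t, ht⟩ := surjective_frobenius (ResidueField A) 2 (residue A a)
  obtain ⟨s, rfl⟩ := residue_surjective t
  refine ⟨s, (residue_eq_zero_iff _).mp ?_⟩
  rw [map_sub, map_pow, ← frobenius_def, ht, sub_self]

namespace IsDiscreteValuationRing

variable {A : Type*} [CommRing A] [IsDomain A] [IsDiscreteValuationRing A] {ϖ : A}

theorem exists_sub_pow_mul_mem (hϖ : Irreducible ϖ)
    (hsq : ∀ a : A, ∃ s, a - s ^ 2 ∈ IsLocalRing.maximalIdeal A)
    (S : AddSubgroup A) (hS : ∀ n s, ϖ ^ n * s ^ 2 ∈ S) (n : ℕ) (w : A) :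
    ∃ c, w - ϖ ^ n * c ∈ S := by
  induction n with
  | zero => exact ⟨w, by simp⟩
  | succ n ih =>
    obtain ⟨c, hc⟩ := ih
    obtain ⟨s, hs⟩ := hsq c
    rw [hϖ.maximalIdeal_eq, Ideal.mem_span_singleton] at hs
    obtain ⟨c', hc'⟩ := hs
    refine ⟨c', ?_⟩
    have h : w - ϖ ^ (n + 1) * c' = (w - ϖ ^ n * c) + ϖ ^ n * s ^ 2 := by
      linear_combination ϖ ^ n * hc'
    exact h ▸ S.add_mem hc (hS n s)

theorem addSubgroup_eq_top_of_forall_pow_mul_sq_mem (hϖ : Irreducible ϖ) (h2 : (2 : A) ≠ 0)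
    (hsq : ∀ a : A, ∃ s, a - s ^ 2 ∈ IsLocalRing.maximalIdeal A)
    (S : AddSubgroup A) (hS : ∀ n s, ϖ ^ n * s ^ 2 ∈ S) : S = ⊤ := by
  obtain ⟨n, u, hu⟩ := eq_unit_mul_pow_irreducible h2 hϖ
  refine eq_top_iff.mpr fun w _ => ?_
  obtain ⟨c, hc⟩ := exists_sub_pow_mul_mem hϖ hsq S hS n w
  have h2c : ϖ ^ n * c = 2 * (↑u⁻¹ * c) := by
    linear_combination (-(↑u⁻¹ * c)) * hu - ϖ ^ n * c * u.inv_mul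
  have := S.two_mul_mem_of_forall_sq_mem (fun s => by simpa using hS 0 s) (↑u⁻¹ * c)
  simpa [h2c] using S.add_mem hc this

end IsDiscreteValuationRing

theorem Irreducible.associated_pow_ramificationIdx' {A B : Type*} [CommRing A] [IsLocalRing A]
    [CommRing B] [IsDomain B] [IsDiscreteValuationRing B] [Algebra A B]
    {ϖA : A} {ϖB : B} (hB : Irreducible ϖB) (hA : maximalIdeal A = Ideal.span {ϖA})
    (hA0 : algebraMap A B ϖA ≠ 0) :
    Associated (ϖB ^ Ideal.ramificationIdx' (maximalIdeal A) (maximalIdeal B))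
      (algebraMap A B ϖA) := by
  obtain ⟨k, u, hk⟩ := IsDiscreteValuationRing.eq_unit_mul_pow_irreducible hA0 hB
  have hmap : (maximalIdeal A).map (algebraMap A B) = maximalIdeal B ^ k := by
    rw [hA, Ideal.map_span, Set.image_singleton, hk, hB.maximalIdeal_eq, Ideal.span_singleton_pow,
      Ideal.span_singleton_mul_left_unit u.isUnit]
  have hk' : Ideal.ramificationIdx' (maximalIdeal A) (maximalIdeal B) = k := by
    refine Ideal.ramificationIdx'_spec hmap.le ?_
    rw [hmap, hB.maximalIdeal_eq, Ideal.span_singleton_pow, Ideal.span_singleton_pow,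
      Ideal.span_singleton_le_span_singleton, pow_dvd_pow_iff hB.ne_zero hB.not_isUnit]
    omega
  rw [hk', hk]
  exact ⟨u, mul_comm _ _⟩

theorem Irreducible.map_of_ramificationIdx'_eq {A B : Type*} [CommRing A] [IsDomain A]
    [IsDiscreteValuationRing A] [CommRing B] [IsDomain B] [IsDiscreteValuationRing B]
    [Algebra A B] {ϖ : B} (hϖ : Irreducible ϖ) (hinj : Function.Injective (algebraMap A B))
    {e : ℕ} (he : Ideal.ramificationIdx' (maximalIdeal A) (maximalIdeal B) = e) (he0 : e ≠ 0)
    (N : B →* A) (hN : ∀ a, N (algebraMap A B a) = a ^ e) : Irreducible (N ϖ) := by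
  obtain ⟨ϖA, hϖA⟩ := IsDiscreteValuationRing.exists_irreducible A
  have h := (hϖ.associated_pow_ramificationIdx' hϖA.maximalIdeal_eq
    ((map_ne_zero_iff _ hinj).mpr hϖA.ne_zero)).map N
  rw [he, map_pow, hN] at h
  have hassoc : Associated (N ϖ) ϖA := associated_of_dvd_dvd
    ((IsIntegrallyClosed.pow_dvd_pow_iff he0).mp h.dvd)
    ((IsIntegrallyClosed.pow_dvd_pow_iff he0).mp h.symm.dvd)
  exact hassoc.symm.irreducible hϖA

section intNormAux

variable (A K L B : Type*) [CommRing A] [CommRing B] [Algebra A B] [Field K] [Field L]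
  [Algebra A K] [IsFractionRing A K] [Algebra K L] [Algebra A L] [IsScalarTower A K L]
  [Algebra B L] [IsScalarTower A B L] [IsIntegralClosure B A L] [FiniteDimensional K L]

theorem Algebra.intNormAux_algebraMap [IsIntegrallyClosed A] (a : A) :
    intNormAux A K L B (algebraMap A B a) = a ^ finrank K L := by
  apply IsFractionRing.injective A K
  rw [map_intNormAux, ← IsScalarTower.algebraMap_apply, IsScalarTower.algebraMap_apply A K L,
    Algebra.norm_algebraMap, map_pow]

theorem Algebra.irreducible_intNormAux [IsDomain A] [IsDiscreteValuationRing A] [IsDomain B]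
    [IsDiscreteValuationRing B]
    (he : Ideal.ramificationIdx' (maximalIdeal A) (maximalIdeal B) = finrank K L)
    {ϖ : B} (hϖ : Irreducible ϖ) : Irreducible (intNormAux A K L B ϖ) :=
  hϖ.map_of_ramificationIdx'_eq (IsScalarTower.algebraMap_injective_of_injective
    (K := K) (L := L) (IsFractionRing.injective A K)) he finrank_pos.ne' _
    (intNormAux_algebraMap A K L B)

theorem Algebra.closure_range_intNormAux_eq_top [IsDomain A] [IsDiscreteValuationRing A]
    [IsDomain B] [IsDiscreteValuationRing B] (hquad : finrank K L = 2)
    (htot : Ideal.ramificationIdx' (maximalIdeal A) (maximalIdeal B) = 2) (h2 : (2 : A) ≠ 0)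
    (hsq : ∀ a : A, ∃ s, a - s ^ 2 ∈ maximalIdeal A) :
    AddSubgroup.closure (Set.range (intNormAux A K L B)) = ⊤ := by
  obtain ⟨ϖ, hϖ⟩ := IsDiscreteValuationRing.exists_irreducible B
  refine IsDiscreteValuationRing.addSubgroup_eq_top_of_forall_pow_mul_sq_mem
    (irreducible_intNormAux A K L B (htot.trans hquad.symm) hϖ) h2 hsq _ fun n s => ?_
  rw [← hquad, ← intNormAux_algebraMap A K L B, ← map_pow, ← map_mul]
  exact AddSubgroup.subset_closure ⟨_, rfl⟩

end intNormAux

namespace IsIntegralClosure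

theorem isDiscreteValuationRing (R K L O : Type*) [CommRing R] [IsDomain R]
    [IsDiscreteValuationRing R] [Field K] [Algebra R K] [IsFractionRing R K] [Field L]
    [Algebra K L] [FiniteDimensional K L] [Algebra.IsSeparable K L] [Algebra R L]
    [IsScalarTower R K L] [CommRing O] [IsDomain O] [IsLocalRing O] [Algebra O L] [Algebra R O]
    [IsScalarTower R O L] [IsIntegralClosure O R L] : IsDiscreteValuationRing O := by
  have : IsDedekindDomain O := isDedekindDomain R K L O
  have : Algebra.IsIntegral R O := isIntegral_algebra R L
  have hO : ¬ IsField O := fun h => IsDiscreteValuationRing.not_isField R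
    (isField_of_isIntegral_of_isField (IsScalarTower.algebraMap_injective_of_injective
      (K := K) (L := L) (IsFractionRing.injective R K)) h)
  exact ((IsDiscreteValuationRing.TFAE O hO).out 0 2).mpr ‹_›

theorem exists_sub_sq_mem_maximalIdeal (R K L O : Type*) [CommRing R] [IsDomain R]
    [IsDiscreteValuationRing R] [Finite (ResidueField R)] [Field K] [Algebra R K]
    [IsFractionRing R K] [Field L] [Algebra K L] [FiniteDimensional K L] [Algebra.IsSeparable K L]
    [Algebra R L] [IsScalarTower R K L] [CommRing O] [IsLocalRing O] [Algebra O L] [Algebra R O]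
    [IsScalarTower R O L] [IsIntegralClosure O R L] (h2 : (2 : R) ∈ maximalIdeal R) (a : O) :
    ∃ s, a - s ^ 2 ∈ maximalIdeal O := by
  have : Algebra.IsIntegral R O := isIntegral_algebra R L
  have : FaithfulSMul R O := (faithfulSMul_iff_algebraMap_injective R O).mpr <|
    IsScalarTower.algebraMap_injective_of_injective (K := K) (L := L) (IsFractionRing.injective R K)
  have : Module.Finite R O := IsIntegralClosure.finite R K L O
  have := ResidueField.finite_of_finite (R := R) (S := O) inferInstance
  refine IsLocalRing.exists_sub_sq_mem_maximalIdeal ?_ a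
  rw [← map_ofNat (algebraMap R O) 2]
  exact map_nonunit (algebraMap R O) 2 h2

end IsIntegralClosure

theorem trace_integral_of_trace_norm_integral_general
    (F E : Type*) [Field F] [Field E]
    [Algebra ℚ_[2] F] [FiniteDimensional ℚ_[2] F]
    [Algebra ℚ_[2] E] [Algebra F E] [IsScalarTower ℚ_[2] F E]
    (O_F O_E : Type*) [CommRing O_F] [CommRing O_E]
    [Algebra O_F F] [IsFractionRing O_F F]
    [Algebra O_E E]
    [Algebra ℤ_[2] O_F] [Algebra ℤ_[2] F] [IsScalarTower ℤ_[2] O_F F]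
    [IsScalarTower ℤ_[2] ℚ_[2] F] [IsIntegralClosure O_F ℤ_[2] F]
    [Algebra ℤ_[2] O_E] [Algebra ℤ_[2] E] [IsScalarTower ℤ_[2] O_E E]
    [IsScalarTower ℤ_[2] ℚ_[2] E] [IsIntegralClosure O_E ℤ_[2] E]
    [Algebra O_F O_E] [Algebra O_F E] [IsScalarTower O_F O_E E] [IsScalarTower O_F F E]
    [IsLocalRing O_F] [IsLocalRing O_E]
    (hquad : Module.finrank F E = 2)
    (htot : Ideal.ramificationIdx'
        (IsLocalRing.maximalIdeal O_F) (IsLocalRing.maximalIdeal O_E) = 2)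
    (d : F)
    (htr : ∀ x : O_E, ∃ z : ℤ_[2], algebraMap ℤ_[2] ℚ_[2] z =
        Algebra.trace ℚ_[2] F (d * Algebra.norm F (algebraMap O_E E x))) :
    ∀ y : O_F, ∃ z : ℤ_[2], algebraMap ℤ_[2] ℚ_[2] z =
      Algebra.trace ℚ_[2] F (d * algebraMap O_F F y) := by
  have : IsDomain O_F := (IsIntegralClosure.algebraMap_injective O_F ℤ_[2] F).isDomain
  have : IsDomain O_E := (IsIntegralClosure.algebraMap_injective O_E ℤ_[2] E).isDomain
  have : FiniteDimensional F E := .of_finrank_eq_succ hquad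
  have : FiniteDimensional ℚ_[2] E := .trans ℚ_[2] F E
  have := IsIntegralClosure.isDiscreteValuationRing ℤ_[2] ℚ_[2] F O_F
  have := IsIntegralClosure.isDiscreteValuationRing ℤ_[2] ℚ_[2] E O_E
  have : IsScalarTower ℤ_[2] F E := .to₁₃₄ _ ℚ_[2] _ _
  have : IsScalarTower ℤ_[2] O_F E := .to₁₂₄ _ _ F _
  have : Algebra.IsIntegral ℤ_[2] O_F := IsIntegralClosure.isIntegral_algebra ℤ_[2] F
  have : IsIntegralClosure O_E O_F E := IsIntegralClosure.tower_top (R := ℤ_[2])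
  have hsq := IsIntegralClosure.exists_sub_sq_mem_maximalIdeal ℤ_[2] ℚ_[2] F O_F
    (by simpa using PadicInt.p_nonunit (p := 2))
  have : CharZero F := charZero_of_injective_algebraMap (algebraMap ℚ_[2] F).injective
  have h2 : (2 : O_F) ≠ 0 := fun h =>
    two_ne_zero (α := F) (by rw [← map_ofNat (algebraMap O_F F) 2, h, map_zero])
  let T : AddSubgroup O_F := (algebraMap ℤ_[2] ℚ_[2]).toAddMonoidHom.range.comap <|
    (Algebra.trace ℚ_[2] F).toAddMonoidHom.comp
      ((AddMonoidHom.mulLeft d).comp (algebraMap O_F F).toAddMonoidHom)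
  have hNT : Set.range (Algebra.intNormAux O_F F E O_E) ⊆ T := by
    rintro _ ⟨x, rfl⟩
    obtain ⟨z, hz⟩ := htr x
    exact ⟨z, hz.trans (by rw [← Algebra.map_intNormAux (A := O_F) (K := F) (L := E)]; rfl)⟩
  intro y
  have hy : y ∈ T := (AddSubgroup.closure_le T).mpr hNT <|
    Algebra.closure_range_intNormAux_eq_top O_F F E O_E hquad htot h2 hsq ▸ AddSubgroup.mem_top y
  simpa [T] using hy

/-- Let `E/F` be a totally ramified quadratic extension of `2`-adic fields with rings
of integers `O_F`, `O_E`.  Suppose `d ∈ F^×` satisfies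
`Tr_{F/ℚ₂}(d · Nm_{E/F}(x)) ∈ ℤ₂` for all `x ∈ O_E`.  Then
`Tr_{F/ℚ₂}(d · y) ∈ ℤ₂` for all `y ∈ O_F`. -/
theorem trace_integral_of_trace_norm_integral
    (F E : Type*) [Field F] [Field E]
    [Algebra ℚ_[2] F] [FiniteDimensional ℚ_[2] F]
    [Algebra ℚ_[2] E] [Algebra F E] [IsScalarTower ℚ_[2] F E]
    (O_F O_E : Type*) [CommRing O_F] [CommRing O_E]
    [Algebra O_F F] [IsFractionRing O_F F]
    [Algebra O_E E] [IsFractionRing O_E E]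
    [Algebra ℤ_[2] O_F] [Algebra ℤ_[2] F] [IsScalarTower ℤ_[2] O_F F]
    [IsScalarTower ℤ_[2] ℚ_[2] F] [IsIntegralClosure O_F ℤ_[2] F]
    [Algebra ℤ_[2] O_E] [Algebra ℤ_[2] E] [IsScalarTower ℤ_[2] O_E E]
    [IsScalarTower ℤ_[2] ℚ_[2] E] [IsIntegralClosure O_E ℤ_[2] E]
    [Algebra O_F O_E] [Algebra O_F E] [IsScalarTower O_F O_E E] [IsScalarTower O_F F E]
    [IsLocalRing O_F] [IsLocalRing O_E]
    (hquad : Module.finrank F E = 2)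
    (htot : Ideal.ramificationIdx'
        (IsLocalRing.maximalIdeal O_F) (IsLocalRing.maximalIdeal O_E) = 2)
    (d : F) (hd : d ≠ 0)
    (htr : ∀ x : O_E, ∃ z : ℤ_[2], algebraMap ℤ_[2] ℚ_[2] z =
        Algebra.trace ℚ_[2] F (d * Algebra.norm F (algebraMap O_E E x))) :
    ∀ y : O_F, ∃ z : ℤ_[2], algebraMap ℤ_[2] ℚ_[2] z =
      Algebra.trace ℚ_[2] F (d * algebraMap O_F F y) :=
  trace_integral_of_trace_norm_integral_general F E O_F O_E hquad htot d htr
end
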